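/- arXiv:2303.15952 — 3 statements merged into one kernel-verified Lean document; each statement's English description precedes it below -/
import Mathlib

section
/- For every Borel-measurable function f : ℝ₊ⁿ → [0,∞] and every s > 0, one has ∫_{ℝ₊ⁿ} f(1/x₁,…,1/xₙ) Δ(x)^{−μ₀−1} ω^A(x) dx = ∫_{ℝ₊ⁿ} f(x) Δ(x)^{−μ₀−1} ω^A(x) dx and ∫_{ℝ₊ⁿ} f(s·x₁,…,s·xₙ) Δ(x)^{−μ₀−1} ω^A(x) dx = ∫_{ℝ₊ⁿ} f(x) Δ(x)^{−μ₀−1} ω^A(x) dx; that is, the measure Δ(x)^{−μ₀−1} ω^A(x) dx on ℝ₊ⁿ is invariant under coordinatewise inversion x ↦ (1/x₁,…,1/xₙ) and under all dilations x ↦ sx. -/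
open MeasureTheory Real

/-- The type-A weight `ω^A(x) = ∏_{i<j} |x_i - x_j|^{2k}`. -/
noncomputable def weightA (n : ℕ) (k : ℝ) (x : Fin n → ℝ) : ℝ :=
  ∏ i : Fin n, ∏ j ∈ Finset.Ioi i, |x i - x j| ^ (2 * k)

/-! Inversion and dilation both act coordinatewise by a bijection `g` of `(0, ∞)`, so by the
change-of-variables formula it suffices that the density `ρ = Δ^{-μ₀-1} ω^A` satisfies
`|∏ g'(xᵢ)| ρ(g x) = ρ(x)`. Under either map each `|xᵢ - xⱼ|` is multiplied by a product `cᵢ cⱼ`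
(`cᵢ = 1/xᵢ`, resp. `cᵢ = √s`), so `ω^A` is multiplied by `(∏ cᵢ)^{2k(n-1)}`; with `μ₀ = k(n-1)`
this factor is exactly compensated by the powers of `Δ` and the Jacobian. -/

theorem Fin.prod_Ioi_mul_eq_prod_pow {M : Type*} [CommMonoid M] {n : ℕ} (c : Fin n → M) :
    ∏ i : Fin n, ∏ j ∈ Finset.Ioi i, c i * c j = (∏ i, c i) ^ (n - 1) := by
  have hswap : ∏ i : Fin n, ∏ j ∈ Finset.Ioi i, c j = ∏ j : Fin n, ∏ _i ∈ Finset.Iio j, c j :=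
    Finset.prod_comm' fun i j => by simp
  simp only [Finset.prod_mul_distrib, hswap, Finset.prod_const, Fin.card_Ioi, Fin.card_Iio]
  rw [← Finset.prod_mul_distrib, ← Finset.prod_pow]
  exact Finset.prod_congr rfl fun i _ => by rw [← pow_add, Nat.sub_add_cancel (by omega)]

theorem Fin.prod_Ioi_mul_rpow {n : ℕ} {c : Fin n → ℝ} (hc : ∀ i, 0 ≤ c i) (a : ℝ) :
    ∏ i : Fin n, ∏ j ∈ Finset.Ioi i, (c i * c j) ^ a = (∏ i, c i) ^ (a * (n - 1)) := by
  rcases n.eq_zero_or_pos with rfl | hn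
  · simp
  simp_rw [mul_rpow (hc _) (hc _), Fin.prod_Ioi_mul_eq_prod_pow (fun i => c i ^ a)]
  rw [Real.finsetProd_rpow _ _ fun i _ => hc i, ← rpow_natCast, ← rpow_mul
      (Finset.prod_nonneg fun i _ => hc i), Nat.cast_sub hn, Nat.cast_one]

theorem weightA_eq_of_abs_sub_eq {n : ℕ} (k : ℝ) {x y c : Fin n → ℝ} (hc : ∀ i, 0 ≤ c i)
    (h : ∀ i j, |y i - y j| = c i * c j * |x i - x j|) :
    weightA n k y = (∏ i, c i) ^ (2 * k * (n - 1)) * weightA n k x := by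
  simp_rw [weightA, h, mul_rpow (mul_nonneg (hc _) (hc _)) (abs_nonneg _),
    Finset.prod_mul_distrib, Fin.prod_Ioi_mul_rpow hc]

theorem weightA_inv {n : ℕ} (k : ℝ) {x : Fin n → ℝ} (hx : ∀ i, 0 < x i) :
    weightA n k (fun i => (x i)⁻¹) = (∏ i, x i) ^ (-(2 * k * (n - 1))) * weightA n k x := by
  rw [weightA_eq_of_abs_sub_eq k (c := fun i => (x i)⁻¹) (fun i => (inv_pos.2 (hx i)).le),
    Finset.prod_inv_distrib, inv_rpow (Finset.prod_nonneg fun i _ => (hx i).le), rpow_neg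
      (Finset.prod_nonneg fun i _ => (hx i).le)]
  intro i j
  rw [inv_sub_inv (hx i).ne' (hx j).ne', abs_div, abs_sub_comm, abs_of_pos (mul_pos (hx i) (hx j)),
    div_eq_inv_mul, mul_inv]

theorem weightA_const_mul {n : ℕ} (k : ℝ) {s : ℝ} (hs : 0 ≤ s) (x : Fin n → ℝ) :
    weightA n k (fun i => s * x i) = s ^ (k * n * (n - 1)) * weightA n k x := by
  rw [weightA_eq_of_abs_sub_eq k (c := fun _ => √s) (fun _ => sqrt_nonneg s)]
  · rw [Finset.prod_const, Finset.card_univ, Fintype.card_fin, sqrt_eq_rpow, ← rpow_natCast,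
      ← rpow_mul hs, ← rpow_mul hs]
    ring_nf
  · intro i j
    rw [← mul_sub, abs_mul, abs_of_nonneg hs, mul_self_sqrt hs]

noncomputable def densityA (n : ℕ) (k : ℝ) (x : Fin n → ℝ) : ℝ :=
  (∏ i, x i) ^ (-(k * (n - 1)) - 1) * weightA n k x

theorem densityA_inv {n : ℕ} (k : ℝ) {x : Fin n → ℝ} (hx : ∀ i, 0 < x i) :
    densityA n k (fun i => (x i)⁻¹) = (∏ i, x i) ^ 2 * densityA n k x := by
  have hΔ : 0 < ∏ i, x i := Finset.prod_pos fun i _ => hx i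
  rw [densityA, densityA, weightA_inv k hx, Finset.prod_inv_distrib, inv_rpow hΔ.le,
    ← rpow_neg hΔ.le, ← mul_assoc, ← mul_assoc, ← rpow_add hΔ, ← rpow_natCast, ← rpow_add hΔ]
  ring_nf

theorem densityA_const_mul {n : ℕ} (k : ℝ) {s : ℝ} (hs : 0 < s) {x : Fin n → ℝ}
    (hx : ∀ i, 0 ≤ x i) :
    densityA n k (fun i => s * x i) = (s ^ n)⁻¹ * densityA n k x := by
  rw [densityA, densityA, weightA_const_mul k hs.le, Finset.prod_mul_distrib, Finset.prod_const,
    Finset.card_univ, Fintype.card_fin, mul_rpow (pow_nonneg hs.le n)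
      (Finset.prod_nonneg fun i _ => hx i), ← rpow_natCast]
  have hexp : (s ^ (n : ℝ)) ^ (-(k * (n - 1)) - 1) * s ^ (k * n * (n - 1)) = (s ^ (n : ℝ))⁻¹ := by
    rw [← rpow_mul hs.le, ← rpow_add hs, ← rpow_neg hs.le]
    ring_nf
  rw [← hexp]
  ring

open ContinuousLinearMap in
theorem setLIntegral_pi_comp_mul_eq_of_jacobian {n : ℕ} {s : Set ℝ} {g g' : ℝ → ℝ}
    {ρ : (Fin n → ℝ) → ℝ} (hs : MeasurableSet s) (hg : ∀ t ∈ s, HasDerivWithinAt g (g' t) s t)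
    (hinj : Set.InjOn g s) (himg : g '' s = s)
    (hρ : ∀ x ∈ Set.univ.pi fun _ => s, |∏ i, g' (x i)| * ρ (fun i => g (x i)) = ρ x)
    (f : (Fin n → ℝ) → ENNReal) :
    ∫⁻ x in Set.univ.pi fun _ => s, f (fun i => g (x i)) * ENNReal.ofReal (ρ x)
      = ∫⁻ x in Set.univ.pi fun _ => s, f x * ENNReal.ofReal (ρ x) := by
  set Ω : Set (Fin n → ℝ) := Set.univ.pi fun _ => s
  have hderiv : ∀ x ∈ Ω, HasFDerivWithinAt (Pi.map fun _ => g)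
      (pi fun i => (toSpanSingleton ℝ (g' (x i))).comp (proj i)) Ω x := fun x hx =>
    hasFDerivWithinAt_pi.2 fun i => (hg _ (hx i trivial)).hasFDerivWithinAt.comp x
      (hasFDerivWithinAt_apply i x Ω) fun y hy => hy i trivial
  have hinjΩ : Set.InjOn (Pi.map fun _ => g) Ω := fun x hx y hy hxy =>
    funext fun i => hinj (hx i trivial) (hy i trivial) (congrFun hxy i)
  have himgΩ : (Pi.map fun _ => g) '' Ω = Ω := by
    rw [Set.piMap_image_univ_pi, himg]
  calc ∫⁻ x in Ω, f (fun i => g (x i)) * ENNReal.ofReal (ρ x)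
      = ∫⁻ x in Ω, ENNReal.ofReal |(pi fun i => (toSpanSingleton ℝ (g' (x i))).comp (proj i)).det|
          * (f (fun i => g (x i)) * ENNReal.ofReal (ρ fun i => g (x i))) := by
        refine setLIntegral_congr_fun (.univ_pi fun _ => hs) fun x hx => ?_
        rw [det_pi, ← hρ x hx, ENNReal.ofReal_mul (abs_nonneg _)]
        simp only [det_toSpanSingleton]
        ring
    _ = ∫⁻ x in (Pi.map fun _ => g) '' Ω, f x * ENNReal.ofReal (ρ x) :=
        (lintegral_image_eq_lintegral_abs_det_fderiv_mul volume (.univ_pi fun _ => hs)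
          hderiv hinjΩ fun y => f y * ENNReal.ofReal (ρ y)).symm
    _ = ∫⁻ x in Ω, f x * ENNReal.ofReal (ρ x) := by rw [himgΩ]

theorem inversion_and_dilation_invariance_general
    (n : ℕ) (k : ℝ)
    (μ₀ : ℝ) (hμ₀ : μ₀ = k * (n - 1))
    (f : (Fin n → ℝ) → ENNReal) (s : ℝ) (hs : 0 < s) :
    (∫⁻ x in Set.univ.pi fun _ : Fin n => Set.Ioi (0 : ℝ),
        f (fun i => (x i)⁻¹) *
          ENNReal.ofReal ((∏ i, x i) ^ (-μ₀ - 1) * weightA n k x)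
      = ∫⁻ x in Set.univ.pi fun _ : Fin n => Set.Ioi (0 : ℝ),
        f x * ENNReal.ofReal ((∏ i, x i) ^ (-μ₀ - 1) * weightA n k x)) ∧
    (∫⁻ x in Set.univ.pi fun _ : Fin n => Set.Ioi (0 : ℝ),
        f (fun i => s * x i) *
          ENNReal.ofReal ((∏ i, x i) ^ (-μ₀ - 1) * weightA n k x)
      = ∫⁻ x in Set.univ.pi fun _ : Fin n => Set.Ioi (0 : ℝ),
        f x * ENNReal.ofReal ((∏ i, x i) ^ (-μ₀ - 1) * weightA n k x)) := by
  subst hμ₀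
  have hpos : ∀ x ∈ Set.univ.pi fun _ : Fin n => Set.Ioi (0 : ℝ), ∀ i, 0 < x i :=
    fun x hx i => hx i trivial
  constructor
  · refine setLIntegral_pi_comp_mul_eq_of_jacobian (g' := fun t => -(t ^ 2)⁻¹) (ρ := densityA n k)
      measurableSet_Ioi (fun t ht => (hasDerivAt_inv (ne_of_gt ht)).hasDerivWithinAt)
      inv_injective.injOn (by ext; simp) (fun x hx => ?_) f
    have hjac : |∏ i, -(x i ^ 2)⁻¹| = ((∏ i, x i) ^ 2)⁻¹ := by
      simp [Finset.abs_prod, Finset.prod_inv_distrib, Finset.prod_pow]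
    have hΔ : (∏ i, x i) ^ 2 ≠ 0 := pow_ne_zero 2 (Finset.prod_pos fun i _ => hpos x hx i).ne'
    rw [densityA_inv k (hpos x hx), hjac, inv_mul_cancel_left₀ hΔ]
  · refine setLIntegral_pi_comp_mul_eq_of_jacobian (g' := fun _ => s) (ρ := densityA n k)
      measurableSet_Ioi (fun t _ => (hasDerivAt_const_mul s).hasDerivWithinAt)
      (mul_right_injective₀ hs.ne').injOn (Set.image_const_mul_Ioi_zero hs) (fun x hx => ?_) f
    rw [densityA_const_mul k hs fun i => (hpos x hx i).le, Finset.prod_const, Finset.card_univ,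
      Fintype.card_fin, abs_of_pos (pow_pos hs n), mul_inv_cancel_left₀ (pow_pos hs n).ne']

/-- the measure `Δ(x)^{-μ₀-1} ω^A(x) dx` on `ℝ₊ⁿ` is invariant under
coordinatewise inversion and under all dilations. -/
theorem inversion_and_dilation_invariance
    (n : ℕ) (hn : 1 ≤ n) (k : ℝ) (hk : 0 ≤ k)
    (μ₀ : ℝ) (hμ₀ : μ₀ = k * (n - 1))
    (f : (Fin n → ℝ) → ENNReal) (hf : Measurable f) (s : ℝ) (hs : 0 < s) :
    (∫⁻ x in Set.univ.pi fun _ : Fin n => Set.Ioi (0 : ℝ),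
        f (fun i => (x i)⁻¹) *
          ENNReal.ofReal ((∏ i, x i) ^ (-μ₀ - 1) * weightA n k x)
      = ∫⁻ x in Set.univ.pi fun _ : Fin n => Set.Ioi (0 : ℝ),
        f x * ENNReal.ofReal ((∏ i, x i) ^ (-μ₀ - 1) * weightA n k x)) ∧
    (∫⁻ x in Set.univ.pi fun _ : Fin n => Set.Ioi (0 : ℝ),
        f (fun i => s * x i) *
          ENNReal.ofReal ((∏ i, x i) ^ (-μ₀ - 1) * weightA n k x)
      = ∫⁻ x in Set.univ.pi fun _ : Fin n => Set.Ioi (0 : ℝ),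
        f x * ENNReal.ofReal ((∏ i, x i) ^ (-μ₀ - 1) * weightA n k x)) :=
  inversion_and_dilation_invariance_general n k μ₀ hμ₀ f s hs
end

section
/- For every μ ∈ ℂ and every generic x ∈ ℝⁿ, Δ(T^B)² ( y ↦ ∏_{i=1}^n (y_i²)^{μ} )(x) = 𝓑(μ) · ∏_{i=1}^n (x_i²)^{μ−1}, where 𝓑(μ) := 4ⁿ ∏_{j=1}^n (μ + k(j−1)) (μ − 1/2 + k' + k(j−1)) and (y_i²)^{μ} denotes the complex power of the positive real y_i² (type-B Bernstein identity). -/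
/-!
Write `x^γ` for `sqMonomial γ x = ∏ⱼ (xⱼ²)^γⱼ`. The squared operators act from `(T_{n-1}^B)²`
down to `(T_0^B)²`, and just before `(T_i^B)²` acts the function is a multiple of `x^γ` with
`γⱼ = μ` for `j ≤ i` and `γⱼ = μ - 1` for `j > i`. For such `γ` every reflection term of `T_i^B`
is explicit: the `k'`-term vanishes by evenness, a pair `(i, j)` with `γⱼ = γᵢ` cancels, and each
of the `n - 1 - i` pairs with `γⱼ = γᵢ - 1` contributes `2 x^γ / xᵢ`. So
`T_i^B x^γ = 2(μ + k(n-1-i)) xᵢ x^{γ - eᵢ}`, and the same bookkeeping for `xᵢ x^{γ - eᵢ}` gives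
the second factor `2(μ - 1/2 + k' + k(n-1-i))` while leaving `x^{γ - eᵢ}`, which has the required
shape for `(T_{i-1}^B)²`.
-/

noncomputable section

open Real Complex

/-- Swap of coordinates `i` and `j`. -/
def sSwap {n : ℕ} (i j : Fin n) (x : Fin n → ℝ) : Fin n → ℝ := x ∘ Equiv.swap i j

/-- Sign flip of coordinate `i`. -/
def sigmaFlip {n : ℕ} (i : Fin n) (x : Fin n → ℝ) : Fin n → ℝ :=
  fun l => if l = i then -x l else x l

/-- Swap of coordinates `i`, `j` together with a sign flip of both. -/
def sigmaSwapFlip {n : ℕ} (i j : Fin n) (x : Fin n → ℝ) : Fin n → ℝ :=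
  fun l => if l = i ∨ l = j then -x (Equiv.swap i j l) else x (Equiv.swap i j l)

/-- The type-B Dunkl operator `T_i^B` on complex-valued functions (pointwise formula). -/
def dunklB {n : ℕ} (k k' : ℝ) (i : Fin n) (f : (Fin n → ℝ) → ℂ) :
    (Fin n → ℝ) → ℂ :=
  fun x => fderiv ℝ f x (Pi.single i 1) +
    (k' : ℂ) * (f x - f (sigmaFlip i x)) / (x i : ℂ) +
    (k : ℂ) * ∑ j ∈ Finset.univ.erase i,
      ((f x - f (sSwap i j x)) / ((x i : ℂ) - (x j : ℂ)) +
        (f x - f (sigmaSwapFlip i j x)) / ((x i : ℂ) + (x j : ℂ)))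

/-- `Δ(T^B)² = (T_1^B)² ∘ ⋯ ∘ (T_n^B)²`. -/
def deltaTBsq {n : ℕ} (k k' : ℝ) : ((Fin n → ℝ) → ℂ) → ((Fin n → ℝ) → ℂ) :=
  (List.finRange n).foldr (fun i F => dunklB k k' i ∘ dunklB k k' i ∘ F) id

/-- A point is generic if all coordinates are nonzero and the squares of the
coordinates are pairwise distinct. -/
def Generic {n : ℕ} (x : Fin n → ℝ) : Prop :=
  (∀ i, x i ≠ 0) ∧ ∀ i j, x i ^ 2 = x j ^ 2 → i = j

open Finset Function

variable {n : ℕ}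

def sqMonomial (γ : Fin n → ℂ) (x : Fin n → ℝ) : ℂ := ∏ j, ((x j ^ 2 : ℝ) : ℂ) ^ γ j

lemma sigmaFlip_apply_sq (i : Fin n) (x : Fin n → ℝ) (l : Fin n) :
    sigmaFlip i x l ^ 2 = x l ^ 2 := by
  unfold sigmaFlip; split_ifs <;> ring

lemma sigmaSwapFlip_apply_sq (i j : Fin n) (x : Fin n → ℝ) (l : Fin n) :
    sigmaSwapFlip i j x l ^ 2 = sSwap i j x l ^ 2 := by
  unfold sigmaSwapFlip sSwap; split_ifs <;> simp

@[simp] lemma sigmaFlip_apply_self (i : Fin n) (x : Fin n → ℝ) : sigmaFlip i x i = -x i := by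
  simp [sigmaFlip]

@[simp] lemma sSwap_apply_self (i j : Fin n) (x : Fin n → ℝ) : sSwap i j x i = x j := by
  simp [sSwap]

@[simp] lemma sigmaSwapFlip_apply_self (i j : Fin n) (x : Fin n → ℝ) :
    sigmaSwapFlip i j x i = -x j := by
  simp [sigmaSwapFlip]

lemma Generic.of_sq_eq_comp_perm {x y : Fin n → ℝ} (hx : Generic x) (e : Equiv.Perm (Fin n))
    (hy : ∀ l, y l ^ 2 = x (e l) ^ 2) : Generic y := by
  refine ⟨fun l hl => hx.1 (e l) ?_, fun a b hab => e.injective (hx.2 _ _ ?_)⟩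
  · simpa [hl] using (hy l).symm
  · rw [← hy, ← hy, hab]

lemma Generic.sigmaFlip {x : Fin n → ℝ} (hx : Generic x) (i : Fin n) :
    Generic (sigmaFlip i x) :=
  hx.of_sq_eq_comp_perm 1 (sigmaFlip_apply_sq i x)

lemma Generic.sSwap {x : Fin n → ℝ} (hx : Generic x) (i j : Fin n) : Generic (sSwap i j x) :=
  hx.of_sq_eq_comp_perm (Equiv.swap i j) fun _ => rfl

lemma Generic.sigmaSwapFlip {x : Fin n → ℝ} (hx : Generic x) (i j : Fin n) :
    Generic (sigmaSwapFlip i j x) :=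
  hx.of_sq_eq_comp_perm (Equiv.swap i j) (sigmaSwapFlip_apply_sq i j x)

lemma isOpen_setOf_generic : IsOpen {x : Fin n → ℝ | Generic x} := by
  have : {x : Fin n → ℝ | Generic x} =
      (⋂ i, {x | x i ≠ 0}) ∩ ⋂ i, ⋂ j, ⋂ (_ : i ≠ j), {x | x i ^ 2 ≠ x j ^ 2} := by
    ext x
    simp only [Generic, Set.mem_ofPred_eq, Set.mem_inter_iff, Set.mem_iInter]
    grind
  rw [this]
  exact (isOpen_iInter_of_finite fun i => isOpen_ne_fun (continuous_apply i) continuous_const).inter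
    (isOpen_iInter_of_finite fun i => isOpen_iInter_of_finite fun j => isOpen_iInter_of_finite
      fun _ => isOpen_ne_fun ((continuous_apply i).pow 2) ((continuous_apply j).pow 2))

lemma Generic.sub_ne_zero {x : Fin n → ℝ} (hx : Generic x) {i j : Fin n} (hij : i ≠ j) :
    (x i : ℂ) - x j ≠ 0 := by
  rw [_root_.sub_ne_zero, Ne, Complex.ofReal_inj]
  exact fun h => hij (hx.2 i j (by rw [h]))

lemma Generic.add_ne_zero {x : Fin n → ℝ} (hx : Generic x) {i j : Fin n} (hij : i ≠ j) :
    (x i : ℂ) + x j ≠ 0 := by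
  rw [← sub_neg_eq_add, _root_.sub_ne_zero, Ne, ← Complex.ofReal_neg, Complex.ofReal_inj]
  exact fun h => hij (hx.2 i j (by rw [h, neg_sq]))

lemma sqMonomial_congr_sq {x y : Fin n → ℝ} (γ : Fin n → ℂ) (h : ∀ l, y l ^ 2 = x l ^ 2) :
    sqMonomial γ y = sqMonomial γ x := by
  simp only [sqMonomial, h]

lemma sqMonomial_sSwap (γ : Fin n → ℂ) (i j : Fin n) (x : Fin n → ℝ) :
    sqMonomial γ (sSwap i j x) = sqMonomial (γ ∘ Equiv.swap i j) x := by
  rw [sqMonomial, ← Equiv.prod_comp (Equiv.swap i j)]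
  simp [sSwap, sqMonomial]

lemma sqMonomial_update (γ : Fin n → ℂ) (x : Fin n → ℝ) (i : Fin n) (c : ℂ) :
    sqMonomial (update γ i c) x =
      ((x i ^ 2 : ℝ) : ℂ) ^ c * ∏ l ∈ univ.erase i, ((x l ^ 2 : ℝ) : ℂ) ^ γ l := by
  rw [sqMonomial, ← mul_prod_erase _ _ (mem_univ i), update_self,
    prod_congr rfl fun l hl => by rw [update_of_ne (ne_of_mem_erase hl)]]

lemma sqMonomial_update_add_one (γ : Fin n → ℂ) {x : Fin n → ℝ} {i : Fin n} (hxi : x i ≠ 0) :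
    sqMonomial (update γ i (γ i + 1)) x = (x i : ℂ) ^ 2 * sqMonomial γ x := by
  have hxi2 : ((x i ^ 2 : ℝ) : ℂ) ≠ 0 := by exact_mod_cast pow_ne_zero 2 hxi
  rw [sqMonomial_update, sqMonomial, ← mul_prod_erase _ _ (mem_univ i),
    Complex.cpow_add _ _ hxi2, Complex.cpow_one]
  push_cast
  ring

lemma sqMonomial_eq_sq_mul_update (γ : Fin n → ℂ) {x : Fin n → ℝ} {i : Fin n} (hxi : x i ≠ 0) :
    sqMonomial γ x = (x i : ℂ) ^ 2 * sqMonomial (update γ i (γ i - 1)) x := by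
  rw [← sqMonomial_update_add_one _ hxi, update_self, update_idem, sub_add_cancel, update_eq_self]

lemma comp_swap_eq_self {α β : Type*} [DecidableEq α] {γ : α → β} {i j : α} (hγ : γ j = γ i) :
    γ ∘ Equiv.swap i j = γ := by
  rw [Equiv.comp_swap_eq_update, ← hγ, update_eq_self, hγ, update_eq_self]

lemma sqMonomial_comp_swap (γ : Fin n → ℂ) {x : Fin n → ℝ} {i j : Fin n} (hxj : x j ≠ 0)
    (hij : i ≠ j) (hγ : γ j = γ i - 1) :
    sqMonomial (γ ∘ Equiv.swap i j) x = (x j : ℂ) ^ 2 * sqMonomial (update γ i (γ i - 1)) x := by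
  rw [← sqMonomial_update_add_one _ hxj]
  congr 1
  ext l
  rcases eq_or_ne l i with rfl | hli
  · simp [hγ, hij]
  rcases eq_or_ne l j with rfl | hlj
  · simp [hli, hγ]
  · simp [hli, hlj, Equiv.swap_apply_of_ne_of_ne]

lemma hasDerivAt_ofReal_sq_cpow (c : ℂ) {t : ℝ} (ht : t ≠ 0) :
    HasDerivAt (fun s : ℝ => ((s ^ 2 : ℝ) : ℂ) ^ c)
      (c * ((t ^ 2 : ℝ) : ℂ) ^ (c - 1) * (2 * t)) t := by
  have hslit : ((t ^ 2 : ℝ) : ℂ) ∈ Complex.slitPlane :=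
    Complex.ofReal_mem_slitPlane.2 (by positivity)
  have h := (Complex.hasStrictDerivAt_cpow_const (c := c) hslit).hasDerivAt.comp t
    (hasDerivAt_pow 2 t).ofReal_comp
  exact h.congr_deriv (by push_cast; ring)

lemma hasFDerivAt_sqMonomial (γ : Fin n → ℂ) {x : Fin n → ℝ} (hx : ∀ l, x l ≠ 0) :
    HasFDerivAt (sqMonomial γ)
      (∑ j, (∏ l ∈ univ.erase j, ((x l ^ 2 : ℝ) : ℂ) ^ γ l) •
        (ContinuousLinearMap.toSpanSingleton ℝ
          (γ j * ((x j ^ 2 : ℝ) : ℂ) ^ (γ j - 1) * (2 * x j))).comp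
          (ContinuousLinearMap.proj j)) x :=
  HasFDerivAt.finsetProd fun j _ =>
    (hasDerivAt_ofReal_sq_cpow (γ j) (hx j)).hasFDerivAt.comp (f := fun y : Fin n → ℝ => y j) x
      (hasFDerivAt_apply j x)

lemma fderiv_sqMonomial_single (γ : Fin n → ℂ) {x : Fin n → ℝ} (hx : ∀ l, x l ≠ 0) (i : Fin n) :
    fderiv ℝ (sqMonomial γ) x (Pi.single i 1) =
      2 * γ i * x i * sqMonomial (update γ i (γ i - 1)) x := by
  rw [(hasFDerivAt_sqMonomial γ hx).fderiv, _root_.sum_apply,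
    sum_eq_single i (fun j _ hji => by simp [hji]) (by simp), sqMonomial_update]
  simp only [ofReal_pow, smul_apply, ContinuousLinearMap.comp_apply,
    ContinuousLinearMap.proj_apply, Pi.single_eq_same, ContinuousLinearMap.toSpanSingleton_apply,
    one_smul, smul_eq_mul]
  ring

lemma fderiv_coord_mul_sqMonomial_single (γ : Fin n → ℂ) {x : Fin n → ℝ} (hx : ∀ l, x l ≠ 0)
    (i : Fin n) :
    fderiv ℝ (fun y => (y i : ℂ) * sqMonomial γ y) x (Pi.single i 1) =
      (2 * γ i + 1) * sqMonomial γ x := by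
  have hcoord : HasFDerivAt (fun y : Fin n → ℝ => (y i : ℂ))
      (Complex.ofRealCLM.comp (ContinuousLinearMap.proj i)) x :=
    (Complex.ofRealCLM.comp (ContinuousLinearMap.proj i : (Fin n → ℝ) →L[ℝ] ℝ)).hasFDerivAt
  have hmono := hasFDerivAt_sqMonomial γ hx
  have hprod : HasFDerivAt (fun y => (y i : ℂ) * sqMonomial γ y) _ x := hcoord.mul hmono
  rw [hprod.fderiv, add_apply, smul_apply, smul_apply, ← hmono.fderiv,
    fderiv_sqMonomial_single γ hx, sqMonomial_eq_sq_mul_update γ (hx i) (x := x)]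
  simp only [smul_eq_mul, ContinuousLinearMap.comp_apply, ContinuousLinearMap.proj_apply,
    Pi.single_eq_same, ofRealCLM_apply, ofReal_one, mul_one]
  ring

lemma sum_erase_ite_lt (i : Fin n) (c : ℂ) :
    ∑ j ∈ univ.erase i, (if i < j then c else 0) = (n - 1 - i : ℕ) * c := by
  have : {j ∈ univ.erase i | i < j} = Ioi i := by
    ext j
    simpa using fun h => h.ne'
  rw [sum_ite, sum_const_zero, add_zero, this, sum_const, Fin.card_Ioi, nsmul_eq_mul]

variable (k k' : ℝ)

lemma dunklB_congr {i : Fin n} {f g : (Fin n → ℝ) → ℂ} (hfg : Set.EqOn f g {y | Generic y})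
    {x : Fin n → ℝ} (hx : Generic x) : dunklB k k' i f x = dunklB k k' i g x := by
  have hev : f =ᶠ[nhds x] g := Filter.eventually_of_mem (isOpen_setOf_generic.mem_nhds hx) hfg
  have hswap : ∀ j, f (sSwap i j x) = g (sSwap i j x) := fun j => hfg (hx.sSwap i j)
  have hswapFlip : ∀ j, f (sigmaSwapFlip i j x) = g (sigmaSwapFlip i j x) :=
    fun j => hfg (hx.sigmaSwapFlip i j)
  simp only [dunklB, hev.fderiv_eq, hfg hx, hfg (hx.sigmaFlip i), hswap, hswapFlip]

lemma dunklB_const_mul (i : Fin n) (C : ℂ) {f : (Fin n → ℝ) → ℂ} {x : Fin n → ℝ}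
    (hf : DifferentiableAt ℝ f x) :
    dunklB k k' i (fun y => C * f y) x = C * dunklB k k' i f x := by
  simp only [dunklB, fderiv_const_mul hf, smul_apply, smul_eq_mul, ← mul_sub,
    mul_div_assoc, ← mul_add, ← mul_sum]
  ring

lemma dunklB_sqMonomial {i : Fin n} {γ : Fin n → ℂ} (hlt : ∀ j < i, γ j = γ i)
    (hgt : ∀ j, i < j → γ j = γ i - 1) {x : Fin n → ℝ} (hx : Generic x) :
    dunklB k k' i (sqMonomial γ) x =
      2 * (γ i + k * (n - 1 - i : ℕ)) * (x i * sqMonomial (update γ i (γ i - 1)) x) := by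
  have hcross : ∀ j ∈ univ.erase i,
      (sqMonomial γ x - sqMonomial γ (sSwap i j x)) / (x i - x j) +
        (sqMonomial γ x - sqMonomial γ (sigmaSwapFlip i j x)) / (x i + x j) =
      if i < j then 2 * (x i * sqMonomial (update γ i (γ i - 1)) x) else 0 := by
    intro j hj
    have hij := (ne_of_mem_erase hj).symm
    rw [sqMonomial_congr_sq γ (sigmaSwapFlip_apply_sq i j x), sqMonomial_sSwap]
    rcases hij.lt_or_gt with hij | hji
    · rw [if_pos hij, sqMonomial_comp_swap γ (hx.1 j) hij.ne (hgt j hij),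
        sqMonomial_eq_sq_mul_update γ (hx.1 i)]
      have := hx.sub_ne_zero hij.ne
      have := hx.add_ne_zero hij.ne
      field_simp
      ring
    · simp [comp_swap_eq_self (hlt j hji), hji.not_gt]
  simp only [dunklB]
  rw [fderiv_sqMonomial_single γ hx.1, sqMonomial_congr_sq γ (sigmaFlip_apply_sq i x), sub_self,
    mul_zero, zero_div, add_zero, sum_congr rfl hcross, sum_erase_ite_lt]
  ring

lemma dunklB_coord_mul_sqMonomial {i : Fin n} {δ : Fin n → ℂ} (hlt : ∀ j < i, δ j = δ i + 1)
    (hgt : ∀ j, i < j → δ j = δ i) {x : Fin n → ℝ} (hx : Generic x) :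
    dunklB k k' i (fun y => (y i : ℂ) * sqMonomial δ y) x =
      2 * (δ i + 1 / 2 + k' + k * (n - 1 - i : ℕ)) * sqMonomial δ x := by
  have hxi : (x i : ℂ) ≠ 0 := Complex.ofReal_ne_zero.2 (hx.1 i)
  have hcross : ∀ j ∈ univ.erase i,
      ((x i : ℂ) * sqMonomial δ x - (sSwap i j x i : ℂ) * sqMonomial δ (sSwap i j x)) /
          (x i - x j) +
        ((x i : ℂ) * sqMonomial δ x -
            (sigmaSwapFlip i j x i : ℂ) * sqMonomial δ (sigmaSwapFlip i j x)) / (x i + x j) =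
      if i < j then 2 * sqMonomial δ x else 0 := by
    intro j hj
    have hij := (ne_of_mem_erase hj).symm
    have := hx.sub_ne_zero hij
    have := hx.add_ne_zero hij
    rw [sqMonomial_congr_sq δ (sigmaSwapFlip_apply_sq i j x), sqMonomial_sSwap, sSwap_apply_self,
      sigmaSwapFlip_apply_self]
    rcases hij.lt_or_gt with hij | hji
    · rw [if_pos hij, comp_swap_eq_self (hgt j hij)]
      push_cast
      field_simp
      ring
    · rw [if_neg hji.not_gt, Equiv.swap_comm,
        sqMonomial_comp_swap δ (hx.1 i) hji.ne (by rw [hlt j hji, add_sub_cancel_right]),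
        sqMonomial_eq_sq_mul_update δ (hx.1 j)]
      push_cast
      field_simp
      ring
  simp only [dunklB]
  rw [fderiv_coord_mul_sqMonomial_single δ hx.1, sqMonomial_congr_sq δ (sigmaFlip_apply_sq i x),
    sigmaFlip_apply_self, sum_congr rfl hcross, sum_erase_ite_lt]
  push_cast
  field_simp
  ring

def bernsteinFactor (μ : ℂ) (p : ℕ) : ℂ := 4 * ((μ + k * p) * (μ - 1 / 2 + k' + k * p))

lemma dunklB_dunklB_const_mul_sqMonomial {i : Fin n} {γ : Fin n → ℂ} (hlt : ∀ j < i, γ j = γ i)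
    (hgt : ∀ j, i < j → γ j = γ i - 1) (C : ℂ) {x : Fin n → ℝ} (hx : Generic x) :
    dunklB k k' i (dunklB k k' i fun y => C * sqMonomial γ y) x =
      C * bernsteinFactor k k' (γ i) (n - 1 - i) * sqMonomial (update γ i (γ i - 1)) x := by
  set δ := update γ i (γ i - 1) with hδ
  have hδi : δ i = γ i - 1 := update_self ..
  have hfirst : Set.EqOn (dunklB k k' i fun y => C * sqMonomial γ y)
      (fun y => C * (2 * (γ i + k * (n - 1 - i : ℕ))) * ((y i : ℂ) * sqMonomial δ y))
      {y | Generic y} := fun y hy => by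
    rw [dunklB_const_mul k k' i C (hasFDerivAt_sqMonomial γ hy.1).differentiableAt,
      dunklB_sqMonomial k k' hlt hgt hy]
    ring
  have hδlt : ∀ j < i, δ j = δ i + 1 := fun j hj => by
    rw [hδi, hδ, update_of_ne hj.ne, hlt j hj, sub_add_cancel]
  have hδgt : ∀ j, i < j → δ j = δ i := fun j hj => by
    rw [hδi, hδ, update_of_ne hj.ne', hgt j hj]
  have hdiff : DifferentiableAt ℝ (fun y => (y i : ℂ) * sqMonomial δ y) x :=
    (Complex.ofRealCLM.differentiableAt.comp x (differentiableAt_apply i x)).mul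
      (hasFDerivAt_sqMonomial δ hx.1).differentiableAt
  rw [dunklB_congr k k' hfirst hx, dunklB_const_mul k k' i _ hdiff,
    dunklB_coord_mul_sqMonomial k k' hδlt hδgt hx, hδi, bernsteinFactor]
  ring

def stageExponent (μ : ℂ) (m : ℕ) : Fin n → ℂ := fun j => if (j : ℕ) < m then μ else μ - 1

lemma update_stageExponent (μ : ℂ) {m : ℕ} (hm : m < n) :
    update (stageExponent μ (m + 1)) ⟨m, hm⟩ (μ - 1) = stageExponent μ m := by
  ext j
  rcases eq_or_ne j ⟨m, hm⟩ with rfl | hj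
  · simp [stageExponent]
  · have hjm : (j : ℕ) ≠ m := fun h => hj (Fin.ext h)
    simp only [update_of_ne hj, stageExponent]
    split_ifs <;> first | rfl | omega

-- `drop (n - t)` keeps the last `t` factors of `deltaTBsq`, i.e. the first `t` to act.
lemma foldr_drop_dunklB_sq_sqMonomial (μ : ℂ) {t : ℕ} (ht : t ≤ n) {x : Fin n → ℝ}
    (hx : Generic x) :
    ((List.finRange n).drop (n - t)).foldr (fun i F => dunklB k k' i ∘ dunklB k k' i ∘ F) id
        (sqMonomial fun _ => μ) x =
      (∏ p ∈ range t, bernsteinFactor k k' μ p) * sqMonomial (stageExponent μ (n - t)) x := by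
  induction t generalizing x with
  | zero =>
    have hstage : stageExponent μ n = fun _ : Fin n => μ := by ext j; simp [stageExponent]
    simp [List.drop_eq_nil_of_le, hstage]
  | succ t ih =>
    set m := n - (t + 1)
    have hm : m < n := by omega
    have hmt : n - t = m + 1 := by omega
    have hdrop : (List.finRange n).drop m = ⟨m, hm⟩ :: (List.finRange n).drop (m + 1) := by
      rw [List.drop_eq_getElem_cons (by simpa using hm)]
      simp
    have hF := fun y (hy : Generic y) => ih (by omega) hy
    rw [hmt] at hF
    have hi : stageExponent μ (m + 1) ⟨m, hm⟩ = μ := by simp [stageExponent]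
    have hlt : ∀ j < (⟨m, hm⟩ : Fin n), stageExponent μ (m + 1) j = μ := fun j hj => by
      simp [stageExponent, Nat.lt_succ_of_lt (Fin.lt_def.1 hj)]
    have hgt : ∀ j, (⟨m, hm⟩ : Fin n) < j → stageExponent μ (m + 1) j = μ - 1 := fun j hj => by
      simp [stageExponent, Fin.lt_def.1 hj]
    rw [hdrop, List.foldr_cons, comp_apply, comp_apply,
      dunklB_congr k k' (fun y hy => dunklB_congr k k' hF hy) hx,
      dunklB_dunklB_const_mul_sqMonomial k k' (fun j hj => by rw [hlt j hj, hi])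
        (fun j hj => by rw [hgt j hj, hi]) _ hx, hi,
      update_stageExponent, prod_range_succ, show n - 1 - m = t by omega]

theorem bernstein_identity_typeB_general
    (n : ℕ) (k : ℝ) (k' : ℝ)
    (μ : ℂ) (x : Fin n → ℝ) (hx : Generic x) :
    deltaTBsq k k' (fun y => ∏ i, ((y i ^ 2 : ℝ) : ℂ) ^ μ) x
      = ((4 : ℂ) ^ n *
          ∏ j : Fin n, ((μ + (k : ℂ) * (j : ℕ)) *
            (μ - 1 / 2 + (k' : ℂ) + (k : ℂ) * (j : ℕ)))) *
        ∏ i, ((x i ^ 2 : ℝ) : ℂ) ^ (μ - 1) := by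
  have hstage : stageExponent μ 0 = fun _ : Fin n => μ - 1 := by ext; simp [stageExponent]
  have hfactors : ∏ p ∈ range n, bernsteinFactor k k' μ p =
      4 ^ n * ∏ j : Fin n, ((μ + k * (j : ℕ)) * (μ - 1 / 2 + k' + k * (j : ℕ))) := by
    rw [Fin.prod_univ_eq_prod_range (fun j => (μ + k * j) * (μ - 1 / 2 + k' + k * j)),
      ← card_range n, ← prod_const, card_range, ← prod_mul_distrib]
    rfl
  have h := foldr_drop_dunklB_sq_sqMonomial k k' μ le_rfl hx
  rw [Nat.sub_self, List.drop_zero, hstage, hfactors] at h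
  exact h

/-- type-B Bernstein identity:
`Δ(T^B)² Δ(x²)^μ = 𝓑(μ) Δ(x²)^{μ-1}` with
`𝓑(μ) = 4ⁿ ∏_{j=1}^n (μ + k(j-1))(μ - 1/2 + k' + k(j-1))`. -/
theorem bernstein_identity_typeB
    (n : ℕ) (hn : 1 ≤ n) (k : ℝ) (hk : 0 ≤ k) (k' : ℝ) (hk' : 0 < k')
    (μ : ℂ) (x : Fin n → ℝ) (hx : Generic x) :
    deltaTBsq k k' (fun y => ∏ i, ((y i ^ 2 : ℝ) : ℂ) ^ μ) x
      = ((4 : ℂ) ^ n *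
          ∏ j : Fin n, ((μ + (k : ℂ) * (j : ℕ)) *
            (μ - 1 / 2 + (k' : ℂ) + (k : ℂ) * (j : ℕ)))) *
        ∏ i, ((x i ^ 2 : ℝ) : ℂ) ^ (μ - 1) :=
  bernstein_identity_typeB_general n k k' μ x hx
end
end

section
/- Let s > 0 and σ ∈ ℝ. The function y ↦ ∏_{i=1}^n (s + y_i²)^{−σ/2} ∏_{1≤i<j≤n} |y_i − y_j|^{2k} is Lebesgue integrable over ℝⁿ if and only if σ > 2k(n−1) + 1 = 2μ₀ + 1. -/
open MeasureTheory Real Set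

/-!
Both directions compare the integrand with products of one-variable functions. Since
`(1 + x²)(1 + y²) = (x - y)² + (1 + xy)²`, the weight is at most `∏ᵢ (1 + yᵢ²)^μ₀`, so the
integrand is dominated by `∏ᵢ (1 + yᵢ²)^(μ₀ - σ/2)`, which is integrable when `σ > 2μ₀ + 1`.
Conversely, by Fubini almost every slice `t ↦ f (t, c)` is integrable; for `c` with distinct
coordinates the slice is bounded below by a multiple of `t^(2μ₀ - σ)` as `t → ∞`, which forces
`2μ₀ - σ < -1`.
-/

lemma rpow_le_max_rpow_mul {a b u v : ℝ} (p : ℝ) (ha : 0 < a) (hu : 0 < u)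
    (hav : a * u ≤ v) (hvb : v ≤ b * u) : v ^ p ≤ max (a ^ p) (b ^ p) * u ^ p := by
  have hv : v = v / u * u := by field_simp
  have hlo : a ≤ v / u := (le_div_iff₀ hu).2 hav
  have hhi : v / u ≤ b := (div_le_iff₀ hu).2 hvb
  rw [hv, mul_rpow (ha.le.trans hlo) hu.le]
  gcongr
  rcases le_or_gt 0 p with hp | hp
  · exact (rpow_le_rpow (ha.le.trans hlo) hhi hp).trans (le_max_right _ _)
  · exact (rpow_le_rpow_of_nonpos ha hlo hp.le).trans (le_max_left _ _)

lemma min_rpow_mul_le_rpow {a b u v : ℝ} (p : ℝ) (ha : 0 < a) (hu : 0 < u)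
    (hav : a * u ≤ v) (hvb : v ≤ b * u) : min (a ^ p) (b ^ p) * u ^ p ≤ v ^ p := by
  have hv : v = v / u * u := by field_simp
  have hlo : a ≤ v / u := (le_div_iff₀ hu).2 hav
  have hhi : v / u ≤ b := (div_le_iff₀ hu).2 hvb
  rw [hv, mul_rpow (ha.le.trans hlo) hu.le]
  gcongr
  rcases le_or_gt 0 p with hp | hp
  · exact (min_le_left _ _).trans (rpow_le_rpow ha.le hlo hp)
  · exact (min_le_right _ _).trans (rpow_le_rpow_of_nonpos (ha.trans_le hlo) hhi hp.le)

lemma integrable_one_add_sq_rpow {p : ℝ} (hp : p < -(1 / 2)) :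
    Integrable fun t : ℝ => (1 + t ^ 2) ^ p := by
  have h := integrable_rpow_neg_one_add_norm_sq (E := ℝ) (μ := volume) (r := -(2 * p))
    (by simp only [Module.finrank_self, Nat.cast_one]; linarith)
  simpa [Real.norm_eq_abs, sq_abs] using h

lemma sq_sub_le_one_add_sq_mul_one_add_sq (x y : ℝ) :
    (x - y) ^ 2 ≤ (1 + x ^ 2) * (1 + y ^ 2) := by
  have h : (1 + x ^ 2) * (1 + y ^ 2) = (x - y) ^ 2 + (1 + x * y) ^ 2 := by ring
  linarith [sq_nonneg (1 + x * y)]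

lemma Fin.prod_prod_Ioi_mul {M : Type*} [CommMonoid M] {n : ℕ} (h : Fin n → M) :
    ∏ i, ∏ j ∈ Finset.Ioi i, (h i * h j) = ∏ i, h i ^ (n - 1) := by
  have swap : ∏ i, ∏ j ∈ Finset.Ioi i, h j = ∏ j, ∏ _i ∈ Finset.Iio j, h j :=
    Finset.prod_comm' (by simp)
  simp only [Finset.prod_mul_distrib, swap, Finset.prod_const, Fin.card_Ioi, Fin.card_Iio]
  rw [← Finset.prod_mul_distrib]
  exact Finset.prod_congr rfl fun i _ => by rw [← pow_add]; congr 1; omega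

lemma MeasureTheory.Integrable.ae_integrable_comp_cons {E : Type*} [NormedAddCommGroup E]
    {m : ℕ} {F : (Fin (m + 1) → ℝ) → E} (hF : Integrable F) :
    ∀ᵐ c : Fin m → ℝ, Integrable fun t => F (Fin.cons t c) := by
  have e := (volume_preserving_piFinSuccAbove (fun _ : Fin (m + 1) => ℝ) 0).symm
  rw [← e.integrable_comp_emb (MeasurableEquiv.measurableEmbedding _)] at hF
  simp only [Function.comp_def, MeasurableEquiv.piFinSuccAbove_symm_apply,
    Fin.insertNthEquiv_zero] at hF
  exact hF.prod_left_ae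

lemma exists_injective_of_ae {m : ℕ} {p : (Fin m → ℝ) → Prop} (h : ∀ᵐ c, p c) :
    ∃ c, Function.Injective c ∧ p c := by
  set T : Set (Fin m → ℝ) := univ.pi fun j => Ioo (j : ℝ) (j + 1)
  have hT : volume T ≠ 0 := by simp [T, volume_pi_pi]
  obtain ⟨c, hcT, hc⟩ := Measure.exists_mem_of_measure_ne_zero_of_ae hT (ae_restrict_of_ae h)
  refine ⟨c, StrictMono.injective fun i j hij => ?_, hc⟩
  have hij' : (i : ℝ) + 1 ≤ j := by exact_mod_cast Fin.lt_def.mp hij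
  linarith [(hcT i (mem_univ _)).2, (hcT j (mem_univ _)).1]

lemma lt_neg_one_of_integrableOn_Ioi_of_mul_rpow_le {f : ℝ → ℝ} {a C R : ℝ} (hR : 0 < R)
    (hC : 0 < C) (hf : IntegrableOn f (Ioi R)) (hle : ∀ t ∈ Ioi R, C * t ^ a ≤ f t) :
    a < -1 := by
  refine (integrableOn_Ioi_rpow_iff hR).1 <|
    (hf.const_mul C⁻¹).mono' (by fun_prop) ((ae_restrict_iff' measurableSet_Ioi).2 ?_)
  refine ae_of_all _ fun t ht => ?_
  have ht0 : 0 < t := hR.trans ht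
  rw [norm_of_nonneg (rpow_nonneg ht0.le _), le_inv_mul_iff₀ hC]
  exact hle t ht

noncomputable def typeAWeight {n : ℕ} (k : ℝ) (y : Fin n → ℝ) : ℝ :=
  ∏ i, ∏ j ∈ Finset.Ioi i, |y i - y j| ^ (2 * k)

noncomputable def cauchyTypeAWeight {n : ℕ} (s σ k : ℝ) (y : Fin n → ℝ) : ℝ :=
  (∏ i, (s + y i ^ 2) ^ (-σ / 2)) * typeAWeight k y

section

variable {n m : ℕ} {s σ k : ℝ}

lemma typeAWeight_nonneg (k : ℝ) (y : Fin n → ℝ) : 0 ≤ typeAWeight k y :=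
  Finset.prod_nonneg fun _ _ => Finset.prod_nonneg fun _ _ => by positivity

lemma typeAWeight_le_prod (hk : 0 ≤ k) (y : Fin n → ℝ) :
    typeAWeight k y ≤ ∏ i, (1 + y i ^ 2) ^ (k * (n - 1 : ℕ)) := by
  have hpair : ∀ i j, |y i - y j| ^ (2 * k) ≤ (1 + y i ^ 2) ^ k * (1 + y j ^ 2) ^ k := by
    intro i j
    rw [rpow_mul (abs_nonneg _), rpow_two, sq_abs, ← mul_rpow (by positivity) (by positivity)]
    exact rpow_le_rpow (sq_nonneg _) (sq_sub_le_one_add_sq_mul_one_add_sq _ _) hk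
  calc typeAWeight k y
      ≤ ∏ i, ∏ j ∈ Finset.Ioi i, (1 + y i ^ 2) ^ k * (1 + y j ^ 2) ^ k :=
        Finset.prod_le_prod (fun _ _ => Finset.prod_nonneg fun _ _ => by positivity)
          fun i _ => Finset.prod_le_prod (fun _ _ => by positivity) fun j _ => hpair i j
    _ = ∏ i, (1 + y i ^ 2) ^ (k * (n - 1 : ℕ)) := by
        rw [Fin.prod_prod_Ioi_mul fun i => (1 + y i ^ 2) ^ k]
        refine Finset.prod_congr rfl fun i _ => ?_
        rw [← rpow_natCast, ← rpow_mul (by positivity)]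

lemma cauchyTypeAWeight_nonneg (hs : 0 ≤ s) (y : Fin n → ℝ) : 0 ≤ cauchyTypeAWeight s σ k y :=
  mul_nonneg (Finset.prod_nonneg fun _ _ => by positivity) (typeAWeight_nonneg k y)

lemma measurable_cauchyTypeAWeight : Measurable (cauchyTypeAWeight (n := n) s σ k) := by
  unfold cauchyTypeAWeight typeAWeight
  fun_prop

lemma exists_add_sq_rpow_le_mul (hs : 0 < s) (p : ℝ) :
    ∃ A, ∀ t : ℝ, (s + t ^ 2) ^ p ≤ A * (1 + t ^ 2) ^ p :=
  ⟨_, fun t => rpow_le_max_rpow_mul (a := min s 1) (b := max s 1) p (lt_min hs one_pos)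
    (by positivity)
    (by nlinarith [min_le_left s 1, min_le_right s 1, sq_nonneg t])
    (by nlinarith [le_max_left s 1, le_max_right s 1, sq_nonneg t])⟩

lemma exists_cauchyTypeAWeight_le_prod (hk : 0 ≤ k) (hs : 0 < s) :
    ∃ A, ∀ y : Fin n → ℝ,
      cauchyTypeAWeight s σ k y ≤ ∏ i, A * (1 + y i ^ 2) ^ (k * (n - 1 : ℕ) - σ / 2) := by
  obtain ⟨A, hA⟩ := exists_add_sq_rpow_le_mul hs (-σ / 2)
  refine ⟨A, fun y => ?_⟩
  calc cauchyTypeAWeight s σ k y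
      ≤ (∏ i, A * (1 + y i ^ 2) ^ (-σ / 2)) * ∏ i, (1 + y i ^ 2) ^ (k * (n - 1 : ℕ)) :=
        mul_le_mul (Finset.prod_le_prod (fun _ _ => by positivity) fun i _ => hA (y i))
          (typeAWeight_le_prod hk y) (typeAWeight_nonneg k y)
          (Finset.prod_nonneg fun i _ => (rpow_nonneg (by positivity) _).trans (hA (y i)))
    _ = ∏ i, A * (1 + y i ^ 2) ^ (k * (n - 1 : ℕ) - σ / 2) := by
        rw [← Finset.prod_mul_distrib]
        refine Finset.prod_congr rfl fun i _ => ?_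
        rw [mul_assoc, ← rpow_add (by positivity)]
        ring_nf

theorem integrable_cauchyTypeAWeight_of_lt (hk : 0 ≤ k) (hs : 0 < s)
    (hσ : 2 * (k * (n - 1 : ℕ)) + 1 < σ) :
    Integrable (cauchyTypeAWeight (n := n) s σ k) := by
  obtain ⟨A, hA⟩ := exists_cauchyTypeAWeight_le_prod (σ := σ) (n := n) hk hs
  have hfactor : Integrable fun t : ℝ => A * (1 + t ^ 2) ^ (k * (n - 1 : ℕ) - σ / 2) :=
    (integrable_one_add_sq_rpow (by linarith)).const_mul A
  refine (Integrable.fintype_prod fun _ => hfactor).mono'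
    measurable_cauchyTypeAWeight.aestronglyMeasurable (ae_of_all _ fun y => ?_)
  rw [norm_of_nonneg (cauchyTypeAWeight_nonneg hs.le y)]
  exact hA y

lemma cauchyTypeAWeight_cons (t : ℝ) (c : Fin m → ℝ) :
    cauchyTypeAWeight s σ k (Fin.cons t c : Fin (m + 1) → ℝ) =
      ((s + t ^ 2) ^ (-σ / 2) * ∏ j, |t - c j| ^ (2 * k)) * cauchyTypeAWeight s σ k c := by
  simp only [cauchyTypeAWeight, typeAWeight, Fin.prod_univ_succ, Fin.prod_Ioi_zero,
    Fin.prod_Ioi_succ, Fin.cons_zero, Fin.cons_succ]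
  ring

lemma cauchyTypeAWeight_pos (hs : 0 < s) {c : Fin m → ℝ} (hc : Function.Injective c) :
    0 < cauchyTypeAWeight s σ k c :=
  mul_pos (Finset.prod_pos fun _ _ => by positivity) <|
    Finset.prod_pos fun i _ => Finset.prod_pos fun j hj =>
      rpow_pos_of_pos (abs_pos.2 <| sub_ne_zero.2 <| hc.ne (Finset.mem_Ioi.1 hj).ne) _

lemma min_mul_rpow_le_add_sq_rpow (hs : 0 ≤ s) (p : ℝ) {t : ℝ} (ht : 1 ≤ t) :
    min 1 ((s + 1) ^ p) * t ^ (2 * p) ≤ (s + t ^ 2) ^ p := by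
  have ht2 : 1 ≤ t ^ 2 := one_le_pow₀ ht
  have h := min_rpow_mul_le_rpow (a := 1) (b := s + 1) (u := t ^ 2) (v := s + t ^ 2) p one_pos
    (by positivity) (by linarith) (by nlinarith)
  convert h using 2
  · rw [one_rpow]
  · rw [← rpow_natCast, ← rpow_mul (by linarith)]
    norm_num

lemma half_rpow_le_prod_abs_sub (hk : 0 ≤ k) (c : Fin m → ℝ) {t : ℝ} (ht0 : 0 ≤ t)
    (ht : ∀ j, 2 * |c j| ≤ t) : (t / 2) ^ (2 * (k * m)) ≤ ∏ j, |t - c j| ^ (2 * k) := by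
  have hj : ∀ j, t / 2 ≤ |t - c j| := fun j => by
    linarith [le_abs_self (t - c j), le_abs_self (c j), ht j]
  calc (t / 2) ^ (2 * (k * m)) = ∏ _j : Fin m, (t / 2) ^ (2 * k) := by
        rw [Finset.prod_const, Finset.card_univ, Fintype.card_fin, ← rpow_natCast,
          ← rpow_mul (by positivity)]
        ring_nf
    _ ≤ ∏ j, |t - c j| ^ (2 * k) :=
        Finset.prod_le_prod (fun _ _ => by positivity) fun j _ =>
          rpow_le_rpow (by positivity) (hj j) (by linarith)

lemma exists_mul_rpow_le_add_sq_rpow_mul_prod (hk : 0 ≤ k) (hs : 0 ≤ s) (c : Fin m → ℝ) :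
    ∃ C > 0, ∃ R > 0, ∀ t ∈ Ioi R,
      C * t ^ (2 * (k * m) - σ) ≤ (s + t ^ 2) ^ (-σ / 2) * ∏ j, |t - c j| ^ (2 * k) := by
  set E := min 1 ((s + 1) ^ (-σ / 2))
  have hE : 0 < E := lt_min one_pos (by positivity)
  refine ⟨E * 2 ^ (-(2 * (k * m))), by positivity, 1 + 2 * ∑ j, |c j|, by positivity,
    fun t ht => ?_⟩
  have ht1 : 1 ≤ t := by linarith [mem_Ioi.1 ht, (by positivity : 0 ≤ 2 * ∑ j, |c j|)]
  have hct : ∀ j, 2 * |c j| ≤ t := fun j => by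
    linarith [mem_Ioi.1 ht, Finset.single_le_sum (fun i _ => abs_nonneg (c i))
      (Finset.mem_univ j)]
  calc E * 2 ^ (-(2 * (k * m))) * t ^ (2 * (k * m) - σ)
      = (E * t ^ (2 * (-σ / 2))) * (t / 2) ^ (2 * (k * m)) := by
        rw [div_rpow (by linarith) zero_le_two, rpow_neg zero_le_two,
          show 2 * (k * m) - σ = 2 * (-σ / 2) + 2 * (k * m) by ring, rpow_add (by linarith)]
        ring
    _ ≤ (s + t ^ 2) ^ (-σ / 2) * ∏ j, |t - c j| ^ (2 * k) :=
        mul_le_mul (min_mul_rpow_le_add_sq_rpow hs _ ht1)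
          (half_rpow_le_prod_abs_sub hk c (by linarith) hct) (by positivity) (by positivity)

theorem lt_of_integrable_cauchyTypeAWeight (hk : 0 ≤ k) (hs : 0 < s)
    (h : Integrable (cauchyTypeAWeight (n := m + 1) s σ k)) : 2 * (k * m) + 1 < σ := by
  obtain ⟨c, hc, hint⟩ := exists_injective_of_ae h.ae_integrable_comp_cons
  obtain ⟨C, hC, R, hR, hle⟩ := exists_mul_rpow_le_add_sq_rpow_mul_prod (σ := σ) hk hs.le c
  have hslice : Integrable fun t => (s + t ^ 2) ^ (-σ / 2) * ∏ j, |t - c j| ^ (2 * k) := by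
    simpa only [cauchyTypeAWeight_cons,
      mul_div_cancel_right₀ _ (cauchyTypeAWeight_pos hs hc).ne'] using
      hint.div_const (cauchyTypeAWeight s σ k c)
  linarith [lt_neg_one_of_integrableOn_Ioi_of_mul_rpow_le hR hC hslice.integrableOn hle]

end

/-- for `s > 0`, the function
`y ↦ ∏ᵢ (s + yᵢ²)^{-σ/2} ∏_{i<j} |yᵢ - yⱼ|^{2k}` is Lebesgue integrable over `ℝⁿ`
if and only if `σ > 2k(n-1) + 1 = 2μ₀ + 1`. -/
theorem integrable_iff_exponent_gt
    (n : ℕ) (hn : 1 ≤ n) (k : ℝ) (hk : 0 ≤ k)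
    (μ₀ : ℝ) (hμ₀ : μ₀ = k * (n - 1))
    (s : ℝ) (hs : 0 < s) (σ : ℝ) :
    Integrable (fun y : Fin n → ℝ =>
      (∏ i, (s + y i ^ 2) ^ (-σ / 2)) *
        ∏ i : Fin n, ∏ j ∈ Finset.Ioi i, |y i - y j| ^ (2 * k)) ↔
    2 * μ₀ + 1 < σ := by
  obtain ⟨m, rfl⟩ : ∃ m, n = m + 1 := ⟨n - 1, by omega⟩
  have hμ₀m : μ₀ = k * m := by rw [hμ₀]; push_cast; ring
  rw [hμ₀m]
  exact ⟨lt_of_integrable_cauchyTypeAWeight hk hs,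
    integrable_cauchyTypeAWeight_of_lt (n := m + 1) hk hs⟩
end
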